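/- For every φ ∈ C_c^∞(ℝ^{1+d}) and every α ∈ (0,2), the convolution φ * ρ̌ of φ with the time-reversed heat kernel belongs to L^α(ℝ₊ × ℝᵈ). -/

import Mathlib

open MeasureTheory Set

lemma gauss_integrable (d : ℕ) (b : ℝ) (hb : 0 < b) :
    Integrable (fun v : EuclideanSpace ℝ (Fin d) => Real.exp (-b * ‖v‖^2)) := by
  have h := (GaussianFourier.integrable_cexp_neg_mul_sq_norm_add (b := (b:ℂ))
    (by simpa using hb) 0 (0 : EuclideanSpace ℝ (Fin d))).norm
  have e : (fun v : EuclideanSpace ℝ (Fin d) => Real.exp (-b * ‖v‖^2))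
      = fun a => ‖Complex.exp (-(b:ℂ) * (‖a‖:ℂ) ^ 2
          + 0 * ((inner ℝ (0 : EuclideanSpace ℝ (Fin d)) a : ℝ) : ℂ))‖ := by
    funext v
    rw [Complex.norm_exp]
    simp only [zero_mul, add_zero, ← Complex.ofReal_pow, ← Complex.ofReal_neg,
      ← Complex.ofReal_mul, Complex.ofReal_re]
  rw [e]; exact h

lemma gauss_integral (d : ℕ) (b : ℝ) (hb : 0 < b) :
    ∫ v : EuclideanSpace ℝ (Fin d), Real.exp (-b * ‖v‖^2) = (Real.pi / b) ^ ((d:ℝ)/2) := by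
  rw [GaussianFourier.integral_rexp_neg_mul_sq_norm hb]; simp

/-- For every test function φ on ℝ^{1+d} and every α ∈ (0,2), the convolution of φ with the
time-reversed heat kernel belongs to L^α(ℝ₊ × ℝᵈ). -/
theorem stmt_3 (d : ℕ) (hd : 1 ≤ d) (α : ℝ) (hα : α ∈ Set.Ioo (0:ℝ) 2)
    (ρ : ℝ → EuclideanSpace ℝ (Fin d) → ℝ)
    (hρ : ∀ s y, ρ s y =
      if 0 < s then (4 * Real.pi * s) ^ (-(d:ℝ)/2) * Real.exp (-‖y‖^2 / (4*s)) else 0)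
    (φ : ℝ → EuclideanSpace ℝ (Fin d) → ℝ)
    (hφ : ContDiff ℝ (⊤ : ℕ∞) (fun p : ℝ × EuclideanSpace ℝ (Fin d) => φ p.1 p.2))
    (hφc : HasCompactSupport (fun p : ℝ × EuclideanSpace ℝ (Fin d) => φ p.1 p.2))
    (g : ℝ → EuclideanSpace ℝ (Fin d) → ℝ)
    (hg : ∀ t x, g t x = ∫ s, ∫ y, ρ (s - t) (y - x) * φ s y) :
    ∫⁻ t in Set.Ioi (0:ℝ), ∫⁻ x, ENNReal.ofReal (|g t x| ^ α) < ⊤ := by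
  obtain ⟨hα0, hα2⟩ := hα
  -- support radius
  obtain ⟨r, hr⟩ := hφc.isCompact.isBounded.subset_closedBall 0
  set M : ℝ := max r 1 with hMdef
  have hM1 : (1:ℝ) ≤ M := le_max_right _ _
  have hM0 : (0:ℝ) < M := by linarith
  have hsupp : ∀ s (y : (EuclideanSpace ℝ (Fin d))), φ s y ≠ 0 → |s| ≤ M ∧ ‖y‖ ≤ M := by
    intro s y h
    have hmem : ((s, y) : ℝ × (EuclideanSpace ℝ (Fin d))) ∈ tsupport (fun p : ℝ × (EuclideanSpace ℝ (Fin d)) => φ p.1 p.2) :=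
      subset_tsupport _ (by simpa using h)
    have h2 := hr hmem
    rw [Metric.mem_closedBall, dist_zero_right, Prod.norm_def] at h2
    have h3 : ‖s‖ ≤ r := le_trans (le_max_left _ _) h2
    have h4 : ‖y‖ ≤ r := le_trans (le_max_right _ _) h2
    rw [Real.norm_eq_abs] at h3
    exact ⟨le_trans h3 (le_max_left _ _), le_trans h4 (le_max_left _ _)⟩
  -- sup bound
  obtain ⟨C₀, hC₀⟩ := hφc.exists_bound_of_continuous hφ.continuous
  set C : ℝ := max C₀ 0 with hCdef
  have hC0 : (0:ℝ) ≤ C := le_max_right _ _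
  have hC : ∀ s (y : (EuclideanSpace ℝ (Fin d))), |φ s y| ≤ C := by
    intro s y
    have := hC₀ (s, y)
    simp only [Real.norm_eq_abs] at this
    exact le_trans this (le_max_left _ _)
  -- vanishing for t > M
  have hvanish : ∀ t (x : (EuclideanSpace ℝ (Fin d))), M < t → g t x = 0 := by
    intro t x ht
    have hz : ∀ s : ℝ, (∫ y : (EuclideanSpace ℝ (Fin d)), ρ (s - t) (y - x) * φ s y) = 0 := by
      intro s
      have hzz : ∀ y : (EuclideanSpace ℝ (Fin d)), ρ (s - t) (y - x) * φ s y = 0 := by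
        intro y
        rcases le_or_gt s t with h1 | h1
        · rw [hρ, if_neg (by linarith), zero_mul]
        · have hφ0 : φ s y = 0 := by
            by_contra hc
            have := (hsupp s y hc).1
            have := le_abs_self s
            linarith
          rw [hφ0, mul_zero]
      simp only [hzz, integral_zero]
    calc g t x = ∫ (_ : ℝ), (0:ℝ) := by
            rw [hg]; exact integral_congr_ae (Filter.Eventually.of_forall hz)
      _ = 0 := by simp
  -- key pointwise bound
  have key : ∀ t (x : (EuclideanSpace ℝ (Fin d))), 0 < t →
      |g t x| ≤ (C * 2 ^ ((d:ℝ)/2) * Real.exp (M/8) * M) * Real.exp (-‖x‖^2/(16*M)) := by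
    intro t x ht
    set CA : ℝ := C * 2 ^ ((d:ℝ)/2) * Real.exp (M/8) * Real.exp (-‖x‖^2/(16*M)) with hCAdef
    have hCA0 : 0 ≤ CA := by positivity
    have inner_bound : ∀ s : ℝ,
        ‖∫ y : (EuclideanSpace ℝ (Fin d)), ρ (s - t) (y - x) * φ s y‖ ≤ (Ioc t M).indicator (fun _ => CA) s := by
      intro s
      by_cases hs : s ∈ Ioc t M
      · rw [indicator_of_mem hs]
        obtain ⟨hst, hsM⟩ := hs
        have hu0 : 0 < s - t := by linarith
        have huM : s - t ≤ M := by linarith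
        set D : ℝ := C * Real.exp (M/8) * Real.exp (-‖x‖^2/(16*M))
            * (4 * Real.pi * (s - t)) ^ (-(d:ℝ)/2) with hDdef
        have hD0 : 0 ≤ D := by positivity
        have hpt : ∀ y : (EuclideanSpace ℝ (Fin d)),
            ‖ρ (s - t) (y - x) * φ s y‖ ≤ D * Real.exp (-(1/(8*(s-t))) * ‖y - x‖^2) := by
          intro y
          by_cases hy : φ s y = 0
          · rw [hy, mul_zero, norm_zero]; positivity
          · have hyM : ‖y‖ ≤ M := (hsupp s y hy).2
            rw [hρ, if_pos hu0]
            have hq0 : (0:ℝ) ≤ ‖y - x‖^2 := sq_nonneg _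
            have hq2 : ‖x‖^2 ≤ 2*‖y - x‖^2 + 2*M^2 := by
              have h3 : ‖x‖ ≤ ‖y‖ + ‖y - x‖ := by
                calc ‖x‖ = ‖y - (y - x)‖ := by congr 1; abel
                  _ ≤ ‖y‖ + ‖y - x‖ := norm_sub_le _ _
              have h4 : ‖x‖^2 ≤ (‖y‖ + ‖y - x‖)^2 := by
                apply pow_le_pow_left₀ (norm_nonneg x) h3
              have h5 : ‖y‖^2 ≤ M^2 := by
                apply pow_le_pow_left₀ (norm_nonneg y) hyM
              nlinarith [sq_nonneg (‖y‖ - ‖y - x‖)]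
            have hexp : -‖y - x‖^2/(4*(s-t))
                ≤ (M/8 + -‖x‖^2/(16*M)) + (-(1/(8*(s-t))) * ‖y - x‖^2) := by
              have e1 : -‖y - x‖^2/(4*(s-t))
                  = -‖y - x‖^2/(8*(s-t)) + (-(1/(8*(s-t))) * ‖y - x‖^2) := by
                field_simp; ring
              have e2 : ‖y - x‖^2/(8*M) ≤ ‖y - x‖^2/(8*(s-t)) := by gcongr <;> linarith
              have e3 : -‖y - x‖^2/(8*M) - (M/8 + -‖x‖^2/(16*M))
                  = (‖x‖^2 - 2*‖y - x‖^2 - 2*M^2) / (16*M) := by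
                field_simp; ring
              have e4 : (‖x‖^2 - 2*‖y - x‖^2 - 2*M^2) / (16*M) ≤ 0 :=
                div_nonpos_of_nonpos_of_nonneg (by linarith) (by linarith)
              rw [e1]
              have e5 : -‖y - x‖^2/(8*(s-t)) ≤ -‖y - x‖^2/(8*M) := by
                rw [neg_div, neg_div, neg_le_neg_iff]
                exact e2
              linarith
            have h5 : Real.exp (-‖y - x‖^2 / (4 * (s-t)))
                ≤ Real.exp (M/8) * Real.exp (-‖x‖^2/(16*M))
                  * Real.exp (-(1/(8*(s-t))) * ‖y - x‖^2) := by
              rw [← Real.exp_add, ← Real.exp_add]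
              exact Real.exp_le_exp.mpr hexp
            have hA0 : (0:ℝ) ≤ (4 * Real.pi * (s - t)) ^ (-(d:ℝ)/2) := by positivity
            rw [Real.norm_eq_abs, abs_mul,
              abs_of_nonneg (by positivity :
                (0:ℝ) ≤ (4 * Real.pi * (s - t)) ^ (-(d:ℝ)/2) * Real.exp (-‖y - x‖^2 / (4*(s-t))))]
            calc (4 * Real.pi * (s - t)) ^ (-(d:ℝ)/2) * Real.exp (-‖y - x‖^2 / (4*(s-t)))
                  * |φ s y|
                ≤ (4 * Real.pi * (s - t)) ^ (-(d:ℝ)/2) * Real.exp (-‖y - x‖^2 / (4*(s-t))) * C :=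
                  mul_le_mul_of_nonneg_left (hC s y) (by positivity)
              _ ≤ (4 * Real.pi * (s - t)) ^ (-(d:ℝ)/2)
                  * (Real.exp (M/8) * Real.exp (-‖x‖^2/(16*M))
                      * Real.exp (-(1/(8*(s-t))) * ‖y - x‖^2)) * C := by gcongr
              _ = D * Real.exp (-(1/(8*(s-t))) * ‖y - x‖^2) := by rw [hDdef]; ring
        have hint : Integrable (fun y : (EuclideanSpace ℝ (Fin d)) => D * Real.exp (-(1/(8*(s-t))) * ‖y - x‖^2)) :=
          ((gauss_integrable d (1/(8*(s-t))) (by positivity)).comp_sub_right x).const_mul D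
        have h6 : ‖∫ y : (EuclideanSpace ℝ (Fin d)), ρ (s - t) (y - x) * φ s y‖
            ≤ ∫ y : (EuclideanSpace ℝ (Fin d)), D * Real.exp (-(1/(8*(s-t))) * ‖y - x‖^2) :=
          norm_integral_le_of_norm_le hint (Filter.Eventually.of_forall hpt)
        have h7 : ∫ y : (EuclideanSpace ℝ (Fin d)), D * Real.exp (-(1/(8*(s-t))) * ‖y - x‖^2)
            = D * (Real.pi / (1/(8*(s-t)))) ^ ((d:ℝ)/2) := by
          rw [integral_const_mul]
          congr 1
          have := integral_sub_right_eq_self (μ := volume)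
            (fun z : (EuclideanSpace ℝ (Fin d)) => Real.exp (-(1/(8*(s-t))) * ‖z‖^2)) x
          rw [this]
          exact gauss_integral d _ (by positivity)
        have h8 : D * (Real.pi / (1/(8*(s-t)))) ^ ((d:ℝ)/2) = CA := by
          have hπu : (0:ℝ) < 4 * Real.pi * (s - t) := by positivity
          have e1 : Real.pi / (1/(8*(s-t))) = 2 * (4 * Real.pi * (s-t)) := by
            field_simp; ring
          rw [hDdef, hCAdef, e1, Real.mul_rpow (by norm_num) (le_of_lt hπu)]
          have e2 : (4*Real.pi*(s-t)) ^ (-(d:ℝ)/2) * (4*Real.pi*(s-t)) ^ ((d:ℝ)/2) = 1 := by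
            rw [← Real.rpow_add hπu, neg_div, neg_add_cancel, Real.rpow_zero]
          calc C * Real.exp (M/8) * Real.exp (-‖x‖^2/(16*M))
                * (4*Real.pi*(s-t)) ^ (-(d:ℝ)/2)
                * (2 ^ ((d:ℝ)/2) * (4*Real.pi*(s-t)) ^ ((d:ℝ)/2))
              = C * 2 ^ ((d:ℝ)/2) * Real.exp (M/8) * Real.exp (-‖x‖^2/(16*M))
                * ((4*Real.pi*(s-t)) ^ (-(d:ℝ)/2) * (4*Real.pi*(s-t)) ^ ((d:ℝ)/2)) := by ring
            _ = C * 2 ^ ((d:ℝ)/2) * Real.exp (M/8) * Real.exp (-‖x‖^2/(16*M)) := by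
                rw [e2, mul_one]
        rw [h7, h8] at h6
        exact h6
      · rw [indicator_of_notMem hs]
        have hzz : ∀ y : (EuclideanSpace ℝ (Fin d)), ρ (s - t) (y - x) * φ s y = 0 := by
          intro y
          rcases le_or_gt s t with h1 | h1
          · rw [hρ, if_neg (by linarith), zero_mul]
          · have hsM : M < s := by
              by_contra h2
              exact hs ⟨h1, le_of_not_gt h2⟩
            have hφ0 : φ s y = 0 := by
              by_contra hc
              have := (hsupp s y hc).1
              have := le_abs_self s
              linarith
            rw [hφ0, mul_zero]
        simp only [hzz, integral_zero, norm_zero]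
        exact le_refl 0
    have hAint : Integrable ((Ioc t M).indicator (fun _ : ℝ => CA)) := by
      refine (integrableOn_const ?_).integrable_indicator measurableSet_Ioc
      exact measure_Ioc_lt_top.ne
    have h9 : ‖∫ s : ℝ, ∫ y : (EuclideanSpace ℝ (Fin d)), ρ (s - t) (y - x) * φ s y‖
        ≤ ∫ s : ℝ, (Ioc t M).indicator (fun _ => CA) s :=
      norm_integral_le_of_norm_le hAint (Filter.Eventually.of_forall inner_bound)
    have h10 : ∫ s : ℝ, (Ioc t M).indicator (fun _ => CA) s
        = (volume (Ioc t M)).toReal * CA := by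
      rw [integral_indicator_const CA measurableSet_Ioc, smul_eq_mul, measureReal_def]
    have h11 : (volume (Ioc t M)).toReal ≤ M := by
      rw [Real.volume_Ioc, ENNReal.toReal_ofReal']
      exact max_le (by linarith) (le_of_lt hM0)
    rw [hg]
    calc |∫ s : ℝ, ∫ y : (EuclideanSpace ℝ (Fin d)), ρ (s - t) (y - x) * φ s y|
        = ‖∫ s : ℝ, ∫ y : (EuclideanSpace ℝ (Fin d)), ρ (s - t) (y - x) * φ s y‖ := (Real.norm_eq_abs _).symm
      _ ≤ (volume (Ioc t M)).toReal * CA := by rw [← h10]; exact h9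
      _ ≤ M * CA := mul_le_mul_of_nonneg_right h11 hCA0
      _ = (C * 2 ^ ((d:ℝ)/2) * Real.exp (M/8) * M) * Real.exp (-‖x‖^2/(16*M)) := by
          rw [hCAdef]; ring
  -- final integration
  set K : ℝ := C * 2 ^ ((d:ℝ)/2) * Real.exp (M/8) * M with hKdef
  have hK0 : 0 ≤ K := by positivity
  have hint2 : Integrable (fun x : (EuclideanSpace ℝ (Fin d)) => (K * Real.exp (-‖x‖^2/(16*M)))^α) := by
    have e : (fun x : (EuclideanSpace ℝ (Fin d)) => (K * Real.exp (-‖x‖^2/(16*M)))^α)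
        = fun x : (EuclideanSpace ℝ (Fin d)) => K^α * Real.exp (-(α/(16*M)) * ‖x‖^2) := by
      funext x
      rw [Real.mul_rpow hK0 (Real.exp_nonneg _), ← Real.exp_mul]
      congr 1
      ring
    rw [e]
    exact (gauss_integrable d (α/(16*M)) (by positivity)).const_mul _
  have hJ : ∫⁻ x : (EuclideanSpace ℝ (Fin d)), ENNReal.ofReal ((K * Real.exp (-‖x‖^2/(16*M)))^α) < ⊤ :=
    hint2.lintegral_lt_top
  have hsub : Ioi (0:ℝ) ⊆ Ioc 0 M ∪ Ioi M := by
    intro t ht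
    rcases le_or_gt t M with h | h
    · exact Or.inl ⟨ht, h⟩
    · exact Or.inr h
  have hsplit : ∫⁻ t in Ioi (0:ℝ), ∫⁻ x, ENNReal.ofReal (|g t x| ^ α)
      ≤ (∫⁻ t in Ioc (0:ℝ) M, ∫⁻ x, ENNReal.ofReal (|g t x| ^ α))
        + ∫⁻ t in Ioi M, ∫⁻ x, ENNReal.ofReal (|g t x| ^ α) :=
    le_trans (lintegral_mono_set hsub) (lintegral_union_le _ _ _)
  have hpart1 : ∫⁻ t in Ioc (0:ℝ) M, ∫⁻ x, ENNReal.ofReal (|g t x| ^ α)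
      ≤ (∫⁻ x : (EuclideanSpace ℝ (Fin d)), ENNReal.ofReal ((K * Real.exp (-‖x‖^2/(16*M)))^α))
        * volume (Ioc (0:ℝ) M) := by
    have hae : ∀ᵐ t ∂(volume.restrict (Ioc (0:ℝ) M)),
        (∫⁻ x, ENNReal.ofReal (|g t x| ^ α))
          ≤ ∫⁻ x : (EuclideanSpace ℝ (Fin d)), ENNReal.ofReal ((K * Real.exp (-‖x‖^2/(16*M)))^α) := by
      filter_upwards [ae_restrict_mem measurableSet_Ioc] with t ht
      refine lintegral_mono fun x => ENNReal.ofReal_le_ofReal ?_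
      exact Real.rpow_le_rpow (abs_nonneg _) (key t x ht.1) (le_of_lt hα0)
    calc ∫⁻ t in Ioc (0:ℝ) M, ∫⁻ x, ENNReal.ofReal (|g t x| ^ α)
        ≤ ∫⁻ _t in Ioc (0:ℝ) M,
            ∫⁻ x : (EuclideanSpace ℝ (Fin d)), ENNReal.ofReal ((K * Real.exp (-‖x‖^2/(16*M)))^α) :=
          lintegral_mono_ae hae
      _ = _ := setLIntegral_const _ _
  have hpart2 : ∫⁻ t in Ioi M, ∫⁻ x, ENNReal.ofReal (|g t x| ^ α) = 0 := by
    have hae : ∀ᵐ t ∂(volume.restrict (Ioi M)),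
        (∫⁻ x, ENNReal.ofReal (|g t x| ^ α)) = (fun _ : ℝ => (0:ENNReal)) t := by
      filter_upwards [ae_restrict_mem measurableSet_Ioi] with t ht
      have h0 : ∀ x : (EuclideanSpace ℝ (Fin d)), |g t x| ^ α = 0 := by
        intro x
        rw [hvanish t x ht, abs_zero, Real.zero_rpow (ne_of_gt hα0)]
      simp [h0]
    rw [lintegral_congr_ae hae, lintegral_zero]
  refine lt_of_le_of_lt hsplit ?_
  rw [hpart2, add_zero]
  exact lt_of_le_of_lt hpart1 (ENNReal.mul_lt_top hJ measure_Ioc_lt_top)
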